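/- Raychaudhuri-type renormalization: suppose along null generators of a 𝐠-null cone (with r = t − u, L(r) = 1) the null expansion satisfies the Raychaudhuri equation L(tr χ) + ½(tr χ)² = −|χ̂|² − k_{NN} tr χ − Ric(L,L), and define z := tr χ + Γ_L − 2/r where Γ_L := Γ_α L^α and Ric(L,L) = f·□_𝐠 𝐠 + L(Γ_L) + k_{NN}Γ_L + f·∂𝐠·∂𝐠 (the wave-coordinate decomposition contracted twice with L). Then z satisfies the renormalized transport equation L z + (2/r) z = −½ z² − |χ̂|² + f·□_𝐠 𝐠 + f·(z, χ̂, ∂𝐠, 1/r)·∂𝐠 + f·z·∂𝐠, in which all dangerous terms L(Γ_L) cancel exactly. -/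

import Mathlib

/-!
Differentiating `z = trχ + Γ_L − 2/r` produces `L(trχ) + L(Γ_L) + 2/r²`. Inserting the
Raychaudhuri equation with the decomposed `Ric(L,L)`, the `L(Γ_L)` coming from the Ricci
term cancels the one coming from `z`, and the `2/r²` from `L(−2/r)` cancels the `2/r²` in
`½(trχ)² = ½(z − Γ_L + 2/r)²`; what is left is an algebraic identity in `z`, `Γ_L`, `1/r`.
-/

theorem hasDerivAt_const_div_sub {𝕜 : Type*} [NontriviallyNormedField 𝕜] (c u t : 𝕜)
    (h : t ≠ u) : HasDerivAt (fun s : 𝕜 => c / (s - u)) (-(c / (t - u) ^ 2)) t := by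
  have hsub : HasDerivAt (fun s : 𝕜 => s - u) 1 t := (hasDerivAt_id t).sub_const u
  simpa [div_eq_mul_inv, mul_comm, mul_assoc] using
    (hsub.inv (sub_ne_zero.mpr h)).const_mul c

theorem raychaudhuri_renormalized_identity {r τ Γ dτ dΓ σ k B Q : ℝ} (hr : r ≠ 0)
    (hray : dτ + (1 / 2) * τ ^ 2 = -σ - k * τ - (B + dΓ + k * Γ + Q)) :
    dτ + dΓ + 2 / r ^ 2
      = -(2 / r) * (τ + Γ - 2 / r) - (1 / 2) * (τ + Γ - 2 / r) ^ 2 - σ - B - Q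
        + (τ + Γ - 2 / r) * Γ - (1 / 2) * Γ ^ 2 - k * (τ + Γ - 2 / r)
        + (2 / r) * (Γ - k) := by
  have hdτ : dτ = -σ - k * τ - (B + dΓ + k * Γ + Q) - (1 / 2) * τ ^ 2 :=
    eq_sub_of_add_eq hray
  rw [hdτ]
  field_simp
  ring

/-- **Renormalized Raychaudhuri equation.** Along a null generator (`L = d/dt`, `r = t − u`),
suppose `trχ` satisfies the Raychaudhuri equation
`L(trχ) + ½(trχ)² = −|χ̂|² − k_{NN}·trχ − Ric(L,L)`, where the Ricci component has the
wave-coordinate decomposition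
`Ric(L,L) = (f·□𝐠𝐠) + L(Γ_L) + k_{NN}·Γ_L + (f·∂𝐠·∂𝐠)`.  Then
`z := trχ + Γ_L − 2/r` satisfies a transport equation
`L z + (2/r) z = −½z² − |χ̂|² + f·□𝐠𝐠 + f·(z, χ̂, ∂𝐠, 1/r)·∂𝐠 + f·z·∂𝐠`
in which the dangerous term `L(Γ_L)` cancels exactly: precisely, `z` has at `t` the
derivative displayed below, which contains no derivative of `Γ_L`. -/
theorem renormalized_raychaudhuri
    (u t : ℝ) (hut : u < t)
    (trχ ΓL chihatSq kNN RicLL boxgTerm quadTerm z : ℝ → ℝ)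
    (dtrχ dΓL : ℝ)
    (htrχ : HasDerivAt trχ dtrχ t)
    (hΓL : HasDerivAt ΓL dΓL t)
    (hz : ∀ s, z s = trχ s + ΓL s - 2 / (s - u))
    (hray : dtrχ + (1 / 2) * (trχ t) ^ 2
      = -chihatSq t - kNN t * trχ t - RicLL t)
    (hric : RicLL t = boxgTerm t + dΓL + kNN t * ΓL t + quadTerm t) :
    HasDerivAt z
      (-(2 / (t - u)) * z t - (1 / 2) * (z t) ^ 2 - chihatSq t
        - boxgTerm t - quadTerm t
        + z t * ΓL t - (1 / 2) * (ΓL t) ^ 2 - kNN t * z t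
        + (2 / (t - u)) * (ΓL t - kNN t)) t := by
  have hz_deriv : HasDerivAt z (dtrχ + dΓL - -(2 / (t - u) ^ 2)) t := by
    rw [show z = fun s => trχ s + ΓL s - 2 / (s - u) from funext hz]
    exact (htrχ.add hΓL).sub (hasDerivAt_const_div_sub 2 u t hut.ne')
  rw [hric] at hray
  convert hz_deriv using 1
  rw [hz t, sub_neg_eq_add]
  exact (raychaudhuri_renormalized_identity (sub_ne_zero.mpr hut.ne') hray).symm
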